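/- For Dirichlet characters ψ and φ, a prime p not dividing the conductor of φ, and any positive integer n divisible by p, the generalized divisor sum σ_{k-1}^{ψ,φ}(n p) satisfies σ_{k-1}^{ψ,φ}(n p) + ψ(p)φ(p) p^{k-1} σ_{k-1}^{ψ,φ}(n/p) = (ψ(p) + φ(p) p^{k-1}) σ_{k-1}^{ψ,φ}(n). -/

import Mathlib

/-!
Write `σ = f ⋆ g` with `f = ψ` and `g = φ · id^{k-1}`, both completely multiplicative. Split the
divisors `d` of `p n` according to whether `p ∣ d`. Those divisible by `p` contribute `g(p) σ(n)`;
those prime to `p` divide `n` (as `p` is prime) and contribute `f(p)` times the part of `σ(n)`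
coming from divisors prime to `p`, which is `σ(n) - g(p) σ(n/p)` because `p ∣ n`.
-/

open Finset

/-- Generalised power divisor sum `σ_{k-1}^{ψ,φ}(n) = ∑_{d ∣ n} ψ(n/d) φ(d) d^{k-1}`. -/
noncomputable def gsigma {u v : ℕ} (ψ : DirichletCharacter ℂ u) (φ : DirichletCharacter ℂ v)
    (k : ℕ) (n : ℕ) : ℂ :=
  ∑ d ∈ n.divisors, ψ ((n / d : ℕ) : ZMod u) * φ ((d : ℕ) : ZMod v) * (d : ℂ) ^ (k - 1)

namespace Nat

theorem filter_dvd_divisors_mul_left {p : ℕ} (hp : p ≠ 0) (N : ℕ) :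
    {d ∈ (p * N).divisors | p ∣ d} = N.divisors.image (p * ·) := by
  ext d
  simp only [mem_filter, mem_divisors, mem_image]
  constructor
  · rintro ⟨⟨hd, hpN⟩, e, rfl⟩
    exact ⟨e, ⟨Nat.dvd_of_mul_dvd_mul_left (Nat.pos_of_ne_zero hp) hd,
      right_ne_zero_of_mul hpN⟩, rfl⟩
  · rintro ⟨e, ⟨he, hN⟩, rfl⟩
    exact ⟨⟨mul_dvd_mul_left p he, mul_ne_zero hp hN⟩, dvd_mul_right p e⟩

theorem filter_not_dvd_divisors_mul_left {p : ℕ} (hp : p.Prime) (N : ℕ) :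
    {d ∈ (p * N).divisors | ¬p ∣ d} = {d ∈ N.divisors | ¬p ∣ d} := by
  ext d
  simp only [mem_filter, mem_divisors]
  constructor
  · rintro ⟨⟨hd, hpN⟩, hpd⟩
    exact ⟨⟨((hp.coprime_iff_not_dvd.mpr hpd).symm.dvd_of_dvd_mul_left hd),
      right_ne_zero_of_mul hpN⟩, hpd⟩
  · rintro ⟨⟨hd, hN⟩, hpd⟩
    exact ⟨⟨hd.mul_left p, mul_ne_zero hp.ne_zero hN⟩, hpd⟩

end Nat

section DivisorConv

variable {R : Type*} [CommSemiring R]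

-- Dirichlet convolution on plain functions: `ψ (0 : ZMod u)` need not vanish, so the characters
-- are not `ArithmeticFunction`s.
def divisorConv (f g : ℕ → R) (n : ℕ) : R :=
  ∑ d ∈ n.divisors, f (n / d) * g d

def divisorConvCoprime (p : ℕ) (f g : ℕ → R) (n : ℕ) : R :=
  ∑ d ∈ n.divisors with ¬p ∣ d, f (n / d) * g d

theorem divisorConv_mul_left {g : ℕ → R} (hg : ∀ a b, g (a * b) = g a * g b) (f : ℕ → R)
    {p : ℕ} (hp : p ≠ 0) (N : ℕ) :
    divisorConv f g (p * N) = divisorConvCoprime p f g (p * N) + g p * divisorConv f g N := by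
  rw [divisorConv, ← sum_filter_not_add_sum_filter _ (p ∣ ·), Nat.filter_dvd_divisors_mul_left hp,
    sum_image fun _ _ _ _ h => Nat.eq_of_mul_eq_mul_left (Nat.pos_of_ne_zero hp) h,
    divisorConvCoprime, divisorConv, mul_sum]
  congr 1
  refine sum_congr rfl fun e _ => ?_
  rw [Nat.mul_div_mul_left _ _ (Nat.pos_of_ne_zero hp), hg]
  ring

theorem divisorConvCoprime_mul_left {f : ℕ → R} (hf : ∀ a b, f (a * b) = f a * f b)
    (g : ℕ → R) {p : ℕ} (hp : p.Prime) (N : ℕ) :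
    divisorConvCoprime p f g (p * N) = f p * divisorConvCoprime p f g N := by
  rw [divisorConvCoprime, Nat.filter_not_dvd_divisors_mul_left hp, divisorConvCoprime, mul_sum]
  refine sum_congr rfl fun d hd => ?_
  rw [Nat.mul_div_assoc p (Nat.dvd_of_mem_divisors (mem_filter.mp hd).1), hf, mul_assoc]

theorem divisorConv_mul_prime_add {f g : ℕ → R} (hf : ∀ a b, f (a * b) = f a * f b)
    (hg : ∀ a b, g (a * b) = g a * g b) {p n : ℕ} (hp : p.Prime) (hpn : p ∣ n) :
    divisorConv f g (n * p) + f p * g p * divisorConv f g (n / p)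
      = (f p + g p) * divisorConv f g n := by
  obtain ⟨m, rfl⟩ := hpn
  have hsplit := divisorConv_mul_left hg f hp.ne_zero m
  rw [mul_comm _ p, divisorConv_mul_left hg f hp.ne_zero, divisorConvCoprime_mul_left hf g hp,
    Nat.mul_div_cancel_left m hp.pos, hsplit]
  ring

end DivisorConv

theorem gsigma_eq_divisorConv {u v : ℕ} (ψ : DirichletCharacter ℂ u)
    (φ : DirichletCharacter ℂ v) (k : ℕ) :
    gsigma ψ φ k = divisorConv (fun m : ℕ => ψ m) (fun d : ℕ => φ d * (d : ℂ) ^ (k - 1)) := by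
  ext n
  exact sum_congr rfl fun _ _ => mul_assoc _ _ _

theorem stmt_0_general {u v : ℕ} (ψ : DirichletCharacter ℂ u) (φ : DirichletCharacter ℂ v)
    (k : ℕ) (p n : ℕ) (hp : p.Prime) (hpn : p ∣ n) :
    gsigma ψ φ k (n * p)
      + ψ ((p : ℕ) : ZMod u) * φ ((p : ℕ) : ZMod v) * (p : ℂ) ^ (k - 1)
          * gsigma ψ φ k (n / p)
      = (ψ ((p : ℕ) : ZMod u) + φ ((p : ℕ) : ZMod v) * (p : ℂ) ^ (k - 1))
          * gsigma ψ φ k n := by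
  rw [gsigma_eq_divisorConv, mul_assoc (ψ _)]
  refine divisorConv_mul_prime_add (fun a b => ?_) (fun a b => ?_) hp hpn
  · simp only [Nat.cast_mul, map_mul]
  · simp only [Nat.cast_mul, map_mul, mul_pow]
    ring

theorem stmt_0 {u v : ℕ} (ψ : DirichletCharacter ℂ u) (φ : DirichletCharacter ℂ v)
    (k : ℕ) (hk : 1 ≤ k) (p n : ℕ) (hp : p.Prime) (hpv : ¬ p ∣ v)
    (hn : 0 < n) (hpn : p ∣ n) :
    gsigma ψ φ k (n * p)
      + ψ ((p : ℕ) : ZMod u) * φ ((p : ℕ) : ZMod v) * (p : ℂ) ^ (k - 1)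
          * gsigma ψ φ k (n / p)
      = (ψ ((p : ℕ) : ZMod u) + φ ((p : ℕ) : ZMod v) * (p : ℂ) ^ (k - 1))
          * gsigma ψ φ k n :=
  stmt_0_general ψ φ k p n hp hpn
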